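/- arXiv:0907.1552 — 2 statements merged into one kernel-verified Lean document; each statement's English description precedes it below -/
import Mathlib

section
/- Fix l > 0 and α, β ∈ (0, π), and let τ : ℝ² → ℝ² be the diagonal linear map τ(x, y) = (x·cos(β/2)/cos(α/2), y·sin(β/2)/sin(α/2)), which maps T(α) onto T(β). Let w : ℝ² → ℝ be C¹ on a neighborhood of T(β) with ∫_{T(β)} w² dA > 0 and ∫_{T(β)} ‖∇w‖² dA > 0, and let μα, μβ ∈ ℝ satisfy μβ = (∫_{T(β)} ‖∇w‖² dA)/(∫_{T(β)} w² dA) and μα ≤ (∫_{T(α)} ‖∇(w∘τ)‖² dA)/(∫_{T(α)} (w∘τ)² dA). If either (i) α < β and ∫_{T(β)} (∂w/∂y)² dA < tan²(α/2)·∫_{T(β)} (∂w/∂x)² dA, or (ii) α > β and ∫_{T(β)} (∂w/∂y)² dA > tan²(α/2)·∫_{T(β)} (∂w/∂x)² dA, then μα < μβ. -/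
open MeasureTheory Real

noncomputable section

/-- The Euclidean plane. -/
abbrev E2 := EuclideanSpace ℝ (Fin 2)

/-- The point (a, b) in the Euclidean plane. -/
def pt (a b : ℝ) : E2 := WithLp.toLp 2 ![a, b]

/-- The Bessel function `J_n(x) = (1/π)·∫₀^π cos(nθ − x·sin θ) dθ`. -/
def besselJ (n : ℕ) (x : ℝ) : ℝ :=
  (1 / π) * ∫ θ in (0:ℝ)..π, Real.cos (n * θ - x * Real.sin θ)

/-- The isosceles triangle `T(α)` with aperture `α` at the origin and
two equal sides of length `l`, symmetric about the x-axis. -/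
def Tri (α l : ℝ) : Set E2 :=
  convexHull ℝ {pt 0 0, pt (l * Real.cos (α/2)) (l * Real.sin (α/2)),
    pt (l * Real.cos (α/2)) (-(l * Real.sin (α/2)))}

/-! The diagonal map `τ = diag(a, b)`, `a = cos(β/2)/cos(α/2)`, `b = sin(β/2)/sin(α/2)`, carries
`T(α)` onto `T(β)`, and its constant Jacobian cancels from the Rayleigh quotient. Hence the
Rayleigh quotient of `w ∘ τ` on `T(α)` is `(a²X + b²Y) / ∫ w²`, where `X` and `Y` are the integrals
of `(∂w/∂x)²` and `(∂w/∂y)²` over `T(β)`, while `μβ = (X + Y) / ∫ w²`. Since `cos² + sin² = 1`,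
`X + Y - (a²X + b²Y) = (cos²(α/2) - cos²(β/2)) (tan²(α/2) X - Y) / sin²(α/2)`,
and each of the two hypotheses says exactly that the two factors have the same sign. -/

open Matrix (toEuclideanCLM diagonal)

theorem setIntegral_image_continuousLinearMap {E F : Type*} [NormedAddCommGroup E]
    [NormedSpace ℝ E] [FiniteDimensional ℝ E] [MeasurableSpace E] [BorelSpace E]
    [NormedAddCommGroup F] [NormedSpace ℝ F] (μ : Measure E) [μ.IsAddHaarMeasure]
    (f : E →L[ℝ] E) (hf : f.det ≠ 0) {s : Set E} (hs : MeasurableSet s) (g : E → F) :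
    ∫ x in f '' s, g x ∂μ = |f.det| • ∫ x in s, g (f x) ∂μ := by
  have hinj : Function.Injective f := (LinearMap.equivOfDetNeZero _ hf).injective
  rw [integral_image_eq_integral_abs_det_fderiv_smul μ hs (fun x _ => f.hasFDerivWithinAt)
    hinj.injOn, integral_smul]

theorem integrableOn_sq_fderiv_apply {E : Type*} [NormedAddCommGroup E] [NormedSpace ℝ E]
    [MeasurableSpace E] [OpensMeasurableSpace E] {μ : Measure E} [IsFiniteMeasureOnCompacts μ]
    {f : E → ℝ} {U K : Set E} (hU : IsOpen U) (hf : ContDiffOn ℝ 1 f U) (hK : IsCompact K)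
    (hKU : K ⊆ U) (v : E) : IntegrableOn (fun x => (fderiv ℝ f x v) ^ 2) K μ :=
  ContinuousOn.integrableOn_compact hK
    ((((hf.continuousOn_fderiv_of_isOpen hU le_rfl).mono hKU).clm_apply continuousOn_const).pow 2)

section EuclideanSpace

variable {ι : Type*} [Fintype ι] [DecidableEq ι]

theorem gradient_apply_eq_fderiv_single (f : EuclideanSpace ℝ ι → ℝ) (x : EuclideanSpace ℝ ι)
    (i : ι) : gradient f x i = fderiv ℝ f x (EuclideanSpace.single i 1) := by
  rw [← inner_gradient_left, EuclideanSpace.inner_single_right]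
  simp

theorem norm_gradient_sq (f : EuclideanSpace ℝ ι → ℝ) (x : EuclideanSpace ℝ ι) :
    ‖gradient f x‖ ^ 2 = ∑ i, (fderiv ℝ f x (EuclideanSpace.single i 1)) ^ 2 := by
  simp [EuclideanSpace.norm_sq_eq, gradient_apply_eq_fderiv_single]

theorem toEuclideanCLM_diagonal_apply (d : ι → ℝ) (x : EuclideanSpace ℝ ι) (i : ι) :
    toEuclideanCLM (𝕜 := ℝ) (diagonal d) x i = d i * x i := by
  simp [Matrix.mulVec_diagonal]

theorem det_toEuclideanCLM (A : Matrix ι ι ℝ) : (toEuclideanCLM (𝕜 := ℝ) A).det = A.det :=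
  LinearMap.det_toLin _ _

theorem det_toEuclideanCLM_diagonal_ne_zero {d : ι → ℝ} (hd : ∀ i, d i ≠ 0) :
    (toEuclideanCLM (𝕜 := ℝ) (diagonal d)).det ≠ 0 := by
  rw [det_toEuclideanCLM, Matrix.det_diagonal]
  exact Finset.prod_ne_zero_iff.2 fun i _ => hd i

theorem norm_gradient_comp_diagonal_sq (d : ι → ℝ) (f : EuclideanSpace ℝ ι → ℝ)
    (x : EuclideanSpace ℝ ι)
    (hf : DifferentiableAt ℝ f (toEuclideanCLM (𝕜 := ℝ) (diagonal d) x)) :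
    ‖gradient (f ∘ toEuclideanCLM (𝕜 := ℝ) (diagonal d)) x‖ ^ 2 =
      ∑ i, d i ^ 2 *
        (fderiv ℝ f (toEuclideanCLM (𝕜 := ℝ) (diagonal d) x) (EuclideanSpace.single i 1)) ^ 2 := by
  have hsingle : ∀ i, toEuclideanCLM (𝕜 := ℝ) (diagonal d) (EuclideanSpace.single i 1) =
      d i • EuclideanSpace.single i 1 := by
    intro i; ext j; by_cases h : j = i <;> simp [toEuclideanCLM_diagonal_apply, h]
  rw [norm_gradient_sq, fderiv_comp x hf (ContinuousLinearMap.differentiableAt _),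
    ContinuousLinearMap.fderiv]
  simp [hsingle, mul_pow]

theorem rayleigh_comp_diagonal {d : ι → ℝ} (hd : ∀ i, d i ≠ 0) {s : Set (EuclideanSpace ℝ ι)}
    (hs : MeasurableSet s) (w : EuclideanSpace ℝ ι → ℝ)
    (hw : ∀ y ∈ toEuclideanCLM (𝕜 := ℝ) (diagonal d) '' s, DifferentiableAt ℝ w y) :
    (∫ x in s, ‖gradient (w ∘ toEuclideanCLM (𝕜 := ℝ) (diagonal d)) x‖ ^ 2) /
        (∫ x in s, w (toEuclideanCLM (𝕜 := ℝ) (diagonal d) x) ^ 2) =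
      (∫ y in toEuclideanCLM (𝕜 := ℝ) (diagonal d) '' s,
          ∑ i, d i ^ 2 * (fderiv ℝ w y (EuclideanSpace.single i 1)) ^ 2) /
        ∫ y in toEuclideanCLM (𝕜 := ℝ) (diagonal d) '' s, w y ^ 2 := by
  set D := toEuclideanCLM (𝕜 := ℝ) (diagonal d)
  have hD := det_toEuclideanCLM_diagonal_ne_zero hd
  rw [setIntegral_image_continuousLinearMap volume D hD hs,
    setIntegral_image_continuousLinearMap volume D hD hs, smul_eq_mul, smul_eq_mul,
    mul_div_mul_left _ _ (abs_ne_zero.2 hD)]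
  congr 1
  exact setIntegral_congr_fun hs fun x hx =>
    norm_gradient_comp_diagonal_sq d w x (hw _ (Set.mem_image_of_mem _ hx))

end EuclideanSpace

theorem cos_half_pos {x : ℝ} (hx : x ∈ Set.Ioo 0 π) : 0 < cos (x / 2) :=
  cos_pos_of_mem_Ioo ⟨by linarith [hx.1, pi_pos], by linarith [hx.2]⟩

theorem sin_half_pos {x : ℝ} (hx : x ∈ Set.Ioo 0 π) : 0 < sin (x / 2) :=
  sin_pos_of_pos_of_lt_pi (by linarith [hx.1]) (by linarith [hx.2, pi_pos])

theorem cos_half_sq_lt_cos_half_sq {x y : ℝ} (hx : x ∈ Set.Ioo 0 π) (hy : y ∈ Set.Ioo 0 π)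
    (hxy : x < y) : cos (y / 2) ^ 2 < cos (x / 2) ^ 2 := by
  have hcos : cos (y / 2) < cos (x / 2) :=
    cos_lt_cos_of_nonneg_of_le_pi (by linarith [hx.1]) (by linarith [hy.2, pi_pos]) (by linarith)
  exact pow_lt_pow_left₀ hcos (cos_half_pos hy).le two_ne_zero

theorem transplanted_energy_lt {α β X Y : ℝ} (hα : α ∈ Set.Ioo 0 π) (hβ : β ∈ Set.Ioo 0 π)
    (hcond : (α < β ∧ Y < tan (α / 2) ^ 2 * X) ∨ (β < α ∧ tan (α / 2) ^ 2 * X < Y)) :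
    (cos (β / 2) / cos (α / 2)) ^ 2 * X + (sin (β / 2) / sin (α / 2)) ^ 2 * Y < X + Y := by
  have hcα := (cos_half_pos hα).ne'
  have hsα := sin_half_pos hα
  have hgap : X + Y - ((cos (β / 2) / cos (α / 2)) ^ 2 * X + (sin (β / 2) / sin (α / 2)) ^ 2 * Y)
      = (cos (α / 2) ^ 2 - cos (β / 2) ^ 2) * (tan (α / 2) ^ 2 * X - Y) / sin (α / 2) ^ 2 := by
    rw [tan_eq_sin_div_cos]
    field_simp
    linear_combination
      (cos (α / 2) ^ 2 * Y) * (sin_sq_add_cos_sq (α / 2) - sin_sq_add_cos_sq (β / 2))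
  suffices 0 < (cos (α / 2) ^ 2 - cos (β / 2) ^ 2) * (tan (α / 2) ^ 2 * X - Y) by
    linarith [div_pos this (pow_pos hsα 2)]
  rcases hcond with ⟨hαβ, hXY⟩ | ⟨hβα, hXY⟩
  · exact mul_pos (sub_pos.2 (cos_half_sq_lt_cos_half_sq hα hβ hαβ)) (sub_pos.2 hXY)
  · exact mul_pos_of_neg_of_neg (sub_neg.2 (cos_half_sq_lt_cos_half_sq hβ hα hβα)) (sub_neg.2 hXY)

theorem pt_one_zero : pt 1 0 = EuclideanSpace.single 0 1 := by
  ext i; fin_cases i <;> simp [pt]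

theorem pt_zero_one : pt 0 1 = EuclideanSpace.single 1 1 := by
  ext i; fin_cases i <;> simp [pt]

theorem toEuclideanCLM_diagonal_pt (p q a b : ℝ) :
    toEuclideanCLM (𝕜 := ℝ) (diagonal ![p, q]) (pt a b) = pt (p * a) (q * b) := by
  ext i; fin_cases i <;> simp [pt]

theorem isCompact_Tri (α l : ℝ) : IsCompact (Tri α l) :=
  (Set.toFinite _).isCompact_convexHull ℝ

theorem image_Tri (α β l : ℝ) (hcα : cos (α / 2) ≠ 0) (hsα : sin (α / 2) ≠ 0) :
    toEuclideanCLM (𝕜 := ℝ) (diagonal ![cos (β / 2) / cos (α / 2), sin (β / 2) / sin (α / 2)]) ''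
      Tri α l = Tri β l := by
  rw [Tri, Tri, ← ContinuousLinearMap.coe_coe, LinearMap.image_convexHull]
  simp only [Set.image_insert_eq, Set.image_singleton, ContinuousLinearMap.coe_coe,
    toEuclideanCLM_diagonal_pt, mul_zero]
  congr 4 <;> field_simp

theorem transplantation_corollary_general
    (l α β : ℝ) (hα : α ∈ Set.Ioo 0 π) (hβ : β ∈ Set.Ioo 0 π)
    (τ : E2 → E2)
    (hτ : τ = fun p => pt (p 0 * Real.cos (β/2) / Real.cos (α/2))
      (p 1 * Real.sin (β/2) / Real.sin (α/2)))
    (w : E2 → ℝ) (hw : ∃ U : Set E2, IsOpen U ∧ Tri β l ⊆ U ∧ ContDiffOn ℝ 1 w U)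
    (hw2 : 0 < ∫ z in Tri β l, (w z)^2)
    (μα μβ : ℝ)
    (hμβ : μβ = (∫ z in Tri β l, ‖gradient w z‖^2) / (∫ z in Tri β l, (w z)^2))
    (hμα : μα ≤ (∫ z in Tri α l, ‖gradient (w ∘ τ) z‖^2) /
      (∫ z in Tri α l, (w (τ z))^2))
    (hcond : (α < β ∧ (∫ z in Tri β l, (fderiv ℝ w z (pt 0 1))^2) <
        Real.tan (α/2)^2 * ∫ z in Tri β l, (fderiv ℝ w z (pt 1 0))^2) ∨
      (β < α ∧ Real.tan (α/2)^2 * (∫ z in Tri β l, (fderiv ℝ w z (pt 1 0))^2) <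
        ∫ z in Tri β l, (fderiv ℝ w z (pt 0 1))^2)) :
    μα < μβ := by
  obtain ⟨U, hU, hTU, hwU⟩ := hw
  set d : Fin 2 → ℝ := ![cos (β / 2) / cos (α / 2), sin (β / 2) / sin (α / 2)]
  have hd : ∀ i, d i ≠ 0 := by
    intro i
    fin_cases i
    · exact div_ne_zero (cos_half_pos hβ).ne' (cos_half_pos hα).ne'
    · exact div_ne_zero (sin_half_pos hβ).ne' (sin_half_pos hα).ne'
  have hτd : τ = toEuclideanCLM (𝕜 := ℝ) (diagonal d) := by
    subst hτ; funext p; ext i; fin_cases i <;> simp [pt, d] <;> ring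
  have himg : toEuclideanCLM (𝕜 := ℝ) (diagonal d) '' Tri α l = Tri β l :=
    image_Tri α β l (cos_half_pos hα).ne' (sin_half_pos hα).ne'
  have hdiff : ∀ z ∈ Tri β l, DifferentiableAt ℝ w z := fun z hz =>
    (hwU.differentiableOn one_ne_zero).differentiableAt (hU.mem_nhds (hTU hz))
  have hX := integrableOn_sq_fderiv_apply (μ := volume) hU hwU (isCompact_Tri β l) hTU (pt 1 0)
  have hY := integrableOn_sq_fderiv_apply (μ := volume) hU hwU (isCompact_Tri β l) hTU (pt 0 1)
  rw [hτd, rayleigh_comp_diagonal hd (isCompact_Tri α l).isClosed.measurableSet w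
    (himg ▸ hdiff), himg] at hμα
  simp only [Fin.sum_univ_two, ← pt_one_zero, ← pt_zero_one] at hμα
  rw [integral_add (hX.const_mul _) (hY.const_mul _), integral_const_mul, integral_const_mul]
    at hμα
  simp only [norm_gradient_sq, Fin.sum_univ_two, ← pt_one_zero, ← pt_zero_one] at hμβ
  rw [integral_add hX hY] at hμβ
  calc μα ≤ _ := hμα
    _ < _ := div_lt_div_of_pos_right (transplanted_energy_lt hα hβ hcond) hw2
    _ = μβ := hμβ.symm

/-- Simplified transplantation corollary (Corollary 5 of Laugesen–Siudeja):
comparing eigenvalues of `T(α)` and `T(β)` via the diagonal linear map `τ`. -/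
theorem transplantation_corollary
    (l α β : ℝ) (hl : 0 < l) (hα : α ∈ Set.Ioo 0 π) (hβ : β ∈ Set.Ioo 0 π)
    (τ : E2 → E2)
    (hτ : τ = fun p => pt (p 0 * Real.cos (β/2) / Real.cos (α/2))
      (p 1 * Real.sin (β/2) / Real.sin (α/2)))
    (w : E2 → ℝ) (hw : ∃ U : Set E2, IsOpen U ∧ Tri β l ⊆ U ∧ ContDiffOn ℝ 1 w U)
    (hw2 : 0 < ∫ z in Tri β l, (w z)^2)
    (hwg : 0 < ∫ z in Tri β l, ‖gradient w z‖^2)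
    (μα μβ : ℝ)
    (hμβ : μβ = (∫ z in Tri β l, ‖gradient w z‖^2) / (∫ z in Tri β l, (w z)^2))
    (hμα : μα ≤ (∫ z in Tri α l, ‖gradient (w ∘ τ) z‖^2) /
      (∫ z in Tri α l, (w (τ z))^2))
    (hcond : (α < β ∧ (∫ z in Tri β l, (fderiv ℝ w z (pt 0 1))^2) <
        Real.tan (α/2)^2 * ∫ z in Tri β l, (fderiv ℝ w z (pt 1 0))^2) ∨
      (β < α ∧ Real.tan (α/2)^2 * (∫ z in Tri β l, (fderiv ℝ w z (pt 1 0))^2) <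
        ∫ z in Tri β l, (fderiv ℝ w z (pt 0 1))^2)) :
    μα < μβ :=
  transplantation_corollary_general l α β hα hβ τ hτ w hw hw2 μα μβ hμβ hμα hcond
end
end

section
/- For every ε > 0 there exists α₀ ∈ (0, π/3) such that for every α ∈ (0, α₀), the subequilateral triangle T = T(α) with equal-side length l = 1 (hence diameter 1) admits a function v : ℝ² → ℝ that is C¹ on a neighborhood of T with ∫_T v dA = 0, ∫_T v² dA > 0, and ∫_T ‖∇v‖² dA < (j_{1,1}² + ε)·∫_T v² dA. (This expresses the asymptotic sharpness of the inequality μ₁·D² > j_{1,1}² for degenerate acute isosceles triangles.) -/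
open MeasureTheory Real

noncomputable section

/-!
The trial function is `v (x, y) = J₀ (c x)` with `c = j₁₁ / cos (α / 2)`, chosen so that
`c · cos (α / 2)`, the abscissa of the far side of `T(α)`, is a zero of `J₁`. Since `v` depends
on `x` alone and the vertical section of `T(α)` at abscissa `x` has length `2 tan (α / 2) x`,
every integral over `T(α)` reduces to a weighted integral `∫₀^{cos (α/2)} x (⋯) dx`. The
identities `J₀' = -J₁` and `(x J₁ x)' = x J₀ x` then give `∫ x J₀ (c x) dx = 0` and
`∫ x J₁ (c x)² dx = ∫ x J₀ (c x)² dx`, so `v` has mean zero and Rayleigh quotient exactly `c²`,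
which tends to `j₁₁²` as `α → 0`.
-/

open Filter Topology Set intervalIntegral

theorem hasDerivAt_besselJ (n : ℕ) (x : ℝ) :
    HasDerivAt (besselJ n)
      ((1 / π) * ∫ θ in (0:ℝ)..π, sin θ * sin (n * θ - x * sin θ)) x := by
  have hF' : ∀ y θ : ℝ, HasDerivAt (fun x : ℝ => cos (n * θ - x * sin θ))
      (sin θ * sin (n * θ - y * sin θ)) y := fun y θ => by
    simpa [mul_comm] using ((hasDerivAt_mul_const (sin θ)).const_sub (n * θ)).cos (x := y)
  refine ((hasDerivAt_integral_of_dominated_loc_of_deriv_le (bound := fun _ => 1)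
    (Metric.ball_mem_nhds x one_pos) (.of_forall fun _ => by fun_prop)
    (Continuous.intervalIntegrable (by fun_prop) _ _)
    (by fun_prop) (.of_forall fun θ _ y _ => ?_) intervalIntegrable_const
    (.of_forall fun θ _ y _ => hF' y θ)).2.const_mul (1 / π))
  rw [norm_mul]
  exact mul_le_one₀ (abs_sin_le_one θ) (norm_nonneg _) (abs_sin_le_one _)

theorem besselJ_zero_eq (x : ℝ) :
    besselJ 0 x = (1 / π) * ∫ θ in (0:ℝ)..π, cos (x * sin θ) := by
  simp [besselJ]

theorem besselJ_one_eq (x : ℝ) :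
    besselJ 1 x = (1 / π) * ∫ θ in (0:ℝ)..π, cos (θ - x * sin θ) := by
  simp [besselJ]

theorem integral_cos_mul_cos_mul_sin (x : ℝ) :
    ∫ θ in (0:ℝ)..π, cos θ * cos (x * sin θ) = 0 := by
  have h := integral_comp_sub_left (fun θ => cos θ * cos (x * sin θ)) (a := 0) (b := π) π
  simp only [sub_self, sub_zero, cos_pi_sub, sin_pi_sub, neg_mul,
    intervalIntegral.integral_neg] at h
  linarith

theorem besselJ_one_eq_integral_sin_mul_sin (x : ℝ) :
    besselJ 1 x = (1 / π) * ∫ θ in (0:ℝ)..π, sin θ * sin (x * sin θ) := by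
  simp_rw [besselJ_one_eq, cos_sub]
  rw [intervalIntegral.integral_add (Continuous.intervalIntegrable (by fun_prop) _ _)
    (Continuous.intervalIntegrable (by fun_prop) _ _), integral_cos_mul_cos_mul_sin, zero_add]

theorem hasDerivAt_besselJ_zero (x : ℝ) : HasDerivAt (besselJ 0) (-besselJ 1 x) x := by
  convert hasDerivAt_besselJ 0 x using 1
  simp [besselJ_one_eq_integral_sin_mul_sin, sin_neg, intervalIntegral.integral_neg]

theorem integral_cos_sub_mul_sin (x : ℝ) :
    ∫ θ in (0:ℝ)..π, cos (θ - x * sin θ)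
      = x * ∫ θ in (0:ℝ)..π, cos θ * cos (θ - x * sin θ) := by
  have hderiv : ∀ θ ∈ uIcc (0:ℝ) π, HasDerivAt (fun t => sin (t - x * sin t))
      (cos (θ - x * sin θ) - x * (cos θ * cos (θ - x * sin θ))) θ := fun θ _ =>
    ((hasDerivAt_id' θ).fun_sub ((hasDerivAt_sin θ).const_mul x)).sin.congr_deriv (by ring)
  have h := integral_eq_sub_of_hasDerivAt hderiv (Continuous.intervalIntegrable (by fun_prop) _ _)
  rw [intervalIntegral.integral_sub (Continuous.intervalIntegrable (by fun_prop) _ _)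
    (Continuous.intervalIntegrable (by fun_prop) _ _), intervalIntegral.integral_const_mul] at h
  simp only [sin_pi, mul_zero, sub_zero, sin_zero] at h
  linarith

theorem hasDerivAt_mul_besselJ_one (x : ℝ) :
    HasDerivAt (fun y => y * besselJ 1 y) (x * besselJ 0 x) x := by
  refine ((hasDerivAt_id' x).mul (hasDerivAt_besselJ 1 x)).congr_deriv ?_
  have hsum : ∫ θ in (0:ℝ)..π, (cos θ * cos (θ - x * sin θ) + sin θ * sin (θ - x * sin θ))
      = ∫ θ in (0:ℝ)..π, cos (x * sin θ) := by
    congr 1 with θ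
    rw [← cos_sub, sub_sub_cancel]
  rw [intervalIntegral.integral_add (Continuous.intervalIntegrable (by fun_prop) _ _)
    (Continuous.intervalIntegrable (by fun_prop) _ _)] at hsum
  simp only [one_mul, Nat.cast_one]
  rw [besselJ_one_eq, besselJ_zero_eq, integral_cos_sub_mul_sin, ← hsum]
  ring

theorem besselJ_zero_zero : besselJ 0 0 = 1 := by
  simp [besselJ_zero_eq, pi_ne_zero]

@[fun_prop]
theorem continuous_besselJ (n : ℕ) : Continuous (besselJ n) :=
  continuous_iff_continuousAt.2 fun x => (hasDerivAt_besselJ n x).continuousAt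

theorem hasDerivAt_besselJ_zero_comp_mul (c x : ℝ) :
    HasDerivAt (fun x => besselJ 0 (c * x)) (-(c * besselJ 1 (c * x))) x := by
  refine ((hasDerivAt_besselJ_zero (c * x)).comp x ((hasDerivAt_id' x).const_mul c)).congr_deriv ?_
  ring

theorem hasDerivAt_mul_besselJ_one_comp_mul {c : ℝ} (hc : c ≠ 0) (x : ℝ) :
    HasDerivAt (fun x => x * besselJ 1 (c * x)) (c * x * besselJ 0 (c * x)) x := by
  have h : HasDerivAt (fun y => c⁻¹ * ((c * y) * besselJ 1 (c * y)))
      (c⁻¹ * ((c * x) * besselJ 0 (c * x) * (c * 1))) x :=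
    ((hasDerivAt_mul_besselJ_one (c * x)).comp x ((hasDerivAt_id' x).const_mul c)).const_mul c⁻¹
  convert h using 1
  · ext y; field_simp
  · field_simp

theorem integral_mul_besselJ_zero_comp_mul {c : ℝ} (hc : c ≠ 0) (s : ℝ) :
    ∫ x in (0:ℝ)..s, x * besselJ 0 (c * x) = s * besselJ 1 (c * s) / c := by
  rw [integral_eq_sub_of_hasDerivAt (f := fun x => x * besselJ 1 (c * x) / c)
    (fun x _ => ((hasDerivAt_mul_besselJ_one_comp_mul hc x).div_const c).congr_deriv
      (by field_simp))
    (Continuous.intervalIntegrable (by fun_prop) _ _)]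
  simp

theorem integral_mul_sq_besselJ_zero_sub_sq_besselJ_one {c : ℝ} (hc : c ≠ 0) (s : ℝ) :
    ∫ x in (0:ℝ)..s, x * (besselJ 0 (c * x) ^ 2 - besselJ 1 (c * x) ^ 2)
      = s * besselJ 1 (c * s) * besselJ 0 (c * s) / c := by
  have hderiv (x : ℝ) : HasDerivAt (fun x => x * besselJ 1 (c * x) * besselJ 0 (c * x) / c)
      (x * (besselJ 0 (c * x) ^ 2 - besselJ 1 (c * x) ^ 2)) x :=
    (((hasDerivAt_mul_besselJ_one_comp_mul hc x).mul
      (hasDerivAt_besselJ_zero_comp_mul c x)).div_const c).congr_deriv (by field_simp; ring)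
  rw [integral_eq_sub_of_hasDerivAt (fun x _ => hderiv x)
    (Continuous.intervalIntegrable (by fun_prop) _ _)]
  simp

theorem integral_mul_sq_besselJ_zero_comp_mul_pos (c : ℝ) {s : ℝ} (hs : 0 < s) :
    0 < ∫ x in (0:ℝ)..s, x * besselJ 0 (c * x) ^ 2 := by
  have hJ : ∀ᶠ x in 𝓝[>] (0:ℝ), besselJ 0 (c * x) ≠ 0 := by
    refine nhdsWithin_le_nhds ((Continuous.tendsto (by fun_prop) 0).eventually_ne ?_)
    simp [besselJ_zero_zero]
  obtain ⟨x, hJx, hx0 : 0 < x, hxs⟩ :=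
    (hJ.and (eventually_mem_nhdsWithin.and (Ioo_mem_nhdsGT hs))).exists
  refine intervalIntegral.integral_pos hs (Continuous.continuousOn (by fun_prop))
    (fun y hy => by have := hy.1.le; positivity) ⟨x, ⟨le_of_lt hx0, hxs.2.le⟩, by positivity⟩

def triangleRegion (a k : ℝ) : Set (ℝ × ℝ) :=
  {p | p.1 ∈ Icc 0 a ∧ p.2 ∈ Icc (-(k * p.1)) (k * p.1)}

theorem measurableSet_triangleRegion (a k : ℝ) : MeasurableSet (triangleRegion a k) :=
  measurableSet_region_between_cc (f := fun x => -(k * x)) (g := fun x => k * x)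
    (by fun_prop) (by fun_prop) measurableSet_Icc

theorem triangleRegion_subset_prod (a : ℝ) {k : ℝ} (hk : 0 ≤ k) :
    triangleRegion a k ⊆ Icc 0 a ×ˢ Icc (-(k * a)) (k * a) := by
  rintro ⟨x, y⟩ ⟨⟨hx0, hxa⟩, hy⟩
  have : k * x ≤ k * a := mul_le_mul_of_nonneg_left hxa hk
  exact ⟨⟨hx0, hxa⟩, ⟨by linarith [hy.1], by linarith [hy.2]⟩⟩

theorem triangleRegion_indicator_apply (a k : ℝ) (F : ℝ → ℝ) (x y : ℝ) :
    (triangleRegion a k).indicator (fun p => F p.1) (x, y)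
      = (Icc 0 a).indicator (fun x => (Icc (-(k * x)) (k * x)).indicator (fun _ => F x) y) x := by
  simp only [triangleRegion, Set.indicator_apply, Set.mem_ofPred_eq]
  split_ifs <;> tauto

theorem setIntegral_triangleRegion_fst {a k : ℝ} (ha : 0 ≤ a) (hk : 0 ≤ k) {F : ℝ → ℝ}
    (hF : Continuous F) :
    ∫ p in triangleRegion a k, F p.1 = ∫ x in (0:ℝ)..a, 2 * k * x * F x := by
  have hint : Integrable ((triangleRegion a k).indicator fun p : ℝ × ℝ => F p.1)
      (volume.prod volume) := by
    rw [← Measure.volume_eq_prod, integrable_indicator_iff (measurableSet_triangleRegion a k)]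
    exact ((hF.comp continuous_fst).continuousOn.integrableOn_compact
      (isCompact_Icc.prod isCompact_Icc)).mono_set (triangleRegion_subset_prod a hk)
  have hslice (x : ℝ) : ∫ y, (triangleRegion a k).indicator (fun p => F p.1) (x, y)
      = (Icc 0 a).indicator (fun x => 2 * k * x * F x) x := by
    simp_rw [triangleRegion_indicator_apply]
    by_cases hx : x ∈ Icc 0 a
    · have : -(k * x) ≤ k * x := by nlinarith [hx.1]
      simp only [Set.indicator_of_mem hx]
      rw [integral_indicator_const _ measurableSet_Icc, Real.volume_real_Icc_of_le this,
        smul_eq_mul]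
      ring
    · simp [Set.indicator_of_notMem hx]
  rw [← MeasureTheory.integral_indicator (measurableSet_triangleRegion a k), Measure.volume_eq_prod,
    integral_prod _ hint]
  simp_rw [hslice]
  rw [MeasureTheory.integral_indicator measurableSet_Icc, integral_Icc_eq_integral_Ioc,
    ← intervalIntegral.integral_of_le ha]

def planeEquivProd : E2 ≃ᵐ ℝ × ℝ :=
  (MeasurableEquiv.toLp 2 (Fin 2 → ℝ)).symm.trans MeasurableEquiv.finTwoArrow

@[simp]
theorem planeEquivProd_apply (z : E2) : planeEquivProd z = (z 0, z 1) := rfl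

theorem measurePreserving_planeEquivProd : MeasurePreserving planeEquivProd :=
  (volume_preserving_finTwoArrow ℝ).comp
    (EuclideanSpace.volume_preserving_symm_measurableEquiv_toLp _)

theorem convex_preimage_triangleRegion (a k : ℝ) :
    Convex ℝ (planeEquivProd ⁻¹' triangleRegion a k) := by
  rintro z ⟨⟨hz0, hza⟩, hz1, hz1'⟩ w ⟨⟨hw0, hwa⟩, hw1, hw1'⟩ s t hs ht hst
  simp only [planeEquivProd_apply] at *
  have e0 : (s • z + t • w) 0 = s * z 0 + t * w 0 := rfl
  have e1 : (s • z + t • w) 1 = s * z 1 + t * w 1 := rfl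
  refine ⟨⟨?_, ?_⟩, ?_, ?_⟩ <;> simp only [planeEquivProd_apply, e0, e1] <;>
    nlinarith [mul_le_mul_of_nonneg_left hz1 hs, mul_le_mul_of_nonneg_left hz1' hs,
      mul_le_mul_of_nonneg_left hw1 ht, mul_le_mul_of_nonneg_left hw1' ht]

theorem convexHull_triangle_eq_preimage_triangleRegion {a k : ℝ} (ha : 0 < a) (hk : 0 < k) :
    convexHull ℝ {pt 0 0, pt a (k * a), pt a (-(k * a))}
      = planeEquivProd ⁻¹' triangleRegion a k := by
  refine (convexHull_min ?_ (convex_preimage_triangleRegion a k)).antisymm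
    fun z ⟨⟨hz0, hza⟩, hz1, hz1'⟩ => ?_
  · rintro _ (rfl | rfl | rfl) <;> simp [triangleRegion, pt, ha.le] <;> positivity
  · simp only [planeEquivProd_apply] at hz0 hza hz1 hz1'
    -- barycentric coordinates of `z`
    let w : Fin 3 → ℝ :=
      ![1 - z 0 / a, (z 0 / a + z 1 / (k * a)) / 2, (z 0 / a - z 1 / (k * a)) / 2]
    have hw : ∀ i ∈ Finset.univ, 0 ≤ w i := by
      intro i _
      fin_cases i <;> simp [w] <;> field_simp <;> linarith
    have hsum : ∑ i, w i = 1 := by simp [w, Fin.sum_univ_three]; ring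
    have hz : ∑ i, w i • ![pt 0 0, pt a (k * a), pt a (-(k * a))] i = z := by
      ext j; fin_cases j <;> simp [w, Fin.sum_univ_three, pt] <;> field_simp <;> ring
    rw [← hz]
    exact (convex_convexHull ℝ _).sum_mem hw hsum
      fun i _ => subset_convexHull ℝ _ (by fin_cases i <;> simp)

theorem cos_half_pos_s18 {α : ℝ} (hα : α ∈ Ioo 0 π) : 0 < cos (α / 2) :=
  cos_pos_of_mem_Ioo ⟨by linarith [hα.1, pi_pos], by linarith [hα.2]⟩

theorem tan_half_pos {α : ℝ} (hα : α ∈ Ioo 0 π) : 0 < tan (α / 2) :=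
  tan_pos_of_pos_of_lt_pi_div_two (by linarith [hα.1]) (by linarith [hα.2])

theorem Tri_one_eq_preimage_triangleRegion {α : ℝ} (hα : α ∈ Ioo 0 π) :
    Tri α 1 = planeEquivProd ⁻¹' triangleRegion (cos (α / 2)) (tan (α / 2)) := by
  rw [Tri, ← convexHull_triangle_eq_preimage_triangleRegion (cos_half_pos_s18 hα) (tan_half_pos hα),
    one_mul, one_mul, tan_mul_cos (cos_half_pos_s18 hα).ne']

theorem setIntegral_Tri_comp_apply_zero {α : ℝ} (hα : α ∈ Ioo 0 π) {F : ℝ → ℝ}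
    (hF : Continuous F) :
    ∫ z in Tri α 1, F (z 0) = ∫ x in (0:ℝ)..cos (α / 2), 2 * tan (α / 2) * x * F x := by
  rw [Tri_one_eq_preimage_triangleRegion hα,
    ← setIntegral_triangleRegion_fst (cos_half_pos_s18 hα).le (tan_half_pos hα).le hF]
  exact measurePreserving_planeEquivProd.setIntegral_preimage_emb
    planeEquivProd.measurableEmbedding (fun p => F p.1) _

theorem HasDerivAt.hasGradientAt_comp_apply {ι : Type*} [Fintype ι] [DecidableEq ι]
    {f : ℝ → ℝ} {f' : ℝ} {z : EuclideanSpace ℝ ι} (i : ι) (hf : HasDerivAt f f' (z i)) :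
    HasGradientAt (fun z : EuclideanSpace ℝ ι => f (z i)) (f' • EuclideanSpace.single i 1) z := by
  rw [hasGradientAt_iff_hasFDerivAt]
  refine (hf.comp_hasFDerivAt z
    (EuclideanSpace.proj i : EuclideanSpace ℝ ι →L[ℝ] ℝ).hasFDerivAt).congr_fderiv ?_
  ext v
  simp [EuclideanSpace.inner_single_left]

def besselTrial (c : ℝ) (z : E2) : ℝ := besselJ 0 (c * z 0)

theorem contDiff_besselTrial (c : ℝ) : ContDiff ℝ 1 (besselTrial c) := by
  have hJ : ContDiff ℝ 1 (besselJ 0) := by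
    rw [contDiff_one_iff_deriv]
    refine ⟨fun x => (hasDerivAt_besselJ_zero x).differentiableAt, ?_⟩
    simp only [funext fun x => (hasDerivAt_besselJ_zero x).deriv]
    fun_prop
  exact hJ.comp (contDiff_const.mul (EuclideanSpace.proj 0 : E2 →L[ℝ] ℝ).contDiff)

theorem norm_gradient_besselTrial_sq (c : ℝ) (z : E2) :
    ‖gradient (besselTrial c) z‖ ^ 2 = (c * besselJ 1 (c * z 0)) ^ 2 := by
  unfold besselTrial
  rw [((hasDerivAt_besselJ_zero_comp_mul c (z 0)).hasGradientAt_comp_apply 0).gradient,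
    norm_smul, PiLp.norm_single, norm_one, mul_one, norm_neg, Real.norm_eq_abs, sq_abs]

theorem integral_Tri_besselTrial {α c : ℝ} (hα : α ∈ Ioo 0 π) (hc : c ≠ 0)
    (hJ : besselJ 1 (c * cos (α / 2)) = 0) :
    ∫ z in Tri α 1, besselTrial c z = 0 := by
  unfold besselTrial
  rw [setIntegral_Tri_comp_apply_zero hα (F := fun x => besselJ 0 (c * x)) (by fun_prop)]
  simp_rw [mul_assoc (2 * tan (α / 2))]
  rw [intervalIntegral.integral_const_mul, integral_mul_besselJ_zero_comp_mul hc, hJ]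
  simp

theorem integral_Tri_besselTrial_sq_pos {α : ℝ} (hα : α ∈ Ioo 0 π) (c : ℝ) :
    0 < ∫ z in Tri α 1, besselTrial c z ^ 2 := by
  unfold besselTrial
  rw [setIntegral_Tri_comp_apply_zero hα (F := fun x => besselJ 0 (c * x) ^ 2) (by fun_prop)]
  simp_rw [mul_assoc (2 * tan (α / 2))]
  rw [intervalIntegral.integral_const_mul]
  have := integral_mul_sq_besselJ_zero_comp_mul_pos c (cos_half_pos_s18 hα)
  have := tan_half_pos hα
  positivity

theorem integral_Tri_norm_gradient_besselTrial_sq {α c : ℝ} (hα : α ∈ Ioo 0 π) (hc : c ≠ 0)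
    (hJ : besselJ 1 (c * cos (α / 2)) = 0) :
    ∫ z in Tri α 1, ‖gradient (besselTrial c) z‖ ^ 2
      = c ^ 2 * ∫ z in Tri α 1, besselTrial c z ^ 2 := by
  have hequi : ∫ x in (0:ℝ)..cos (α / 2), x * besselJ 1 (c * x) ^ 2
      = ∫ x in (0:ℝ)..cos (α / 2), x * besselJ 0 (c * x) ^ 2 := by
    have h := integral_mul_sq_besselJ_zero_sub_sq_besselJ_one hc (cos (α / 2))
    simp_rw [mul_sub] at h
    rw [intervalIntegral.integral_sub (Continuous.intervalIntegrable (by fun_prop) _ _)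
      (Continuous.intervalIntegrable (by fun_prop) _ _), hJ, mul_zero, zero_mul, zero_div] at h
    linarith
  simp_rw [norm_gradient_besselTrial_sq, besselTrial]
  rw [setIntegral_Tri_comp_apply_zero hα (F := fun x => (c * besselJ 1 (c * x)) ^ 2) (by fun_prop),
    setIntegral_Tri_comp_apply_zero hα (F := fun x => besselJ 0 (c * x) ^ 2) (by fun_prop)]
  calc ∫ x in (0:ℝ)..cos (α / 2), 2 * tan (α / 2) * x * (c * besselJ 1 (c * x)) ^ 2
      = 2 * tan (α / 2) * c ^ 2 * ∫ x in (0:ℝ)..cos (α / 2), x * besselJ 1 (c * x) ^ 2 := by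
        rw [← intervalIntegral.integral_const_mul]; congr 1 with x; ring
    _ = c ^ 2 * ∫ x in (0:ℝ)..cos (α / 2), 2 * tan (α / 2) * x * besselJ 0 (c * x) ^ 2 := by
        rw [hequi, ← intervalIntegral.integral_const_mul, ← intervalIntegral.integral_const_mul]
        congr 1 with x; ring

theorem exists_Ioo_forall_of_eventually_nhdsGT {P : ℝ → Prop} {a b : ℝ} (hab : a < b)
    (h : ∀ᶠ x in 𝓝[>] a, P x) : ∃ c ∈ Ioo a b, ∀ x ∈ Ioo a c, P x := by
  obtain ⟨u, hu, hsub⟩ := mem_nhdsGT_iff_exists_Ioo_subset.1 h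
  obtain ⟨c, hac, hc⟩ := exists_between (lt_min hu hab)
  exact ⟨c, ⟨hac, hc.trans_le (min_le_right _ _)⟩,
    fun x hx => hsub ⟨hx.1, hx.2.trans (hc.trans_le (min_le_left _ _))⟩⟩

/-- Asymptotic sharpness of `μ₁·D² > j_{1,1}²`: for every `ε > 0` there is
`α₀ ∈ (0, π/3)` such that every subequilateral triangle `T(α)` with `α < α₀`
and unit equal sides admits a mean-zero trial function with Rayleigh quotient
below `j_{1,1}² + ε`. -/
theorem degenerate_acute_sharpness
    (j11 : ℝ) (hj11 : IsLeast {x : ℝ | 0 < x ∧ besselJ 1 x = 0} j11) :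
    ∀ ε : ℝ, 0 < ε → ∃ α₀ : ℝ, α₀ ∈ Set.Ioo 0 (π/3) ∧
      ∀ α : ℝ, α ∈ Set.Ioo 0 α₀ →
        ∃ v : E2 → ℝ, (∃ U : Set E2, IsOpen U ∧ Tri α 1 ⊆ U ∧ ContDiffOn ℝ 1 v U) ∧
          (∫ z in Tri α 1, v z = 0) ∧
          (0 < ∫ z in Tri α 1, (v z)^2) ∧
          ∫ z in Tri α 1, ‖gradient v z‖^2 <
            (j11^2 + ε) * ∫ z in Tri α 1, (v z)^2 := by
  intro ε hε
  obtain ⟨⟨hj0, hjz⟩, -⟩ := hj11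
  have hlim : ∀ᶠ α in 𝓝[>] (0:ℝ), (j11 / cos (α / 2)) ^ 2 < j11 ^ 2 + ε := by
    have hcont : ContinuousAt (fun α => (j11 / cos (α / 2)) ^ 2) 0 := by
      fun_prop (disch := simp)
    exact nhdsWithin_le_nhds (hcont.tendsto.eventually_lt_const (by simpa using hε))
  obtain ⟨α₀, hα₀, hsharp⟩ :=
    exists_Ioo_forall_of_eventually_nhdsGT (by positivity : (0:ℝ) < π / 3) hlim
  refine ⟨α₀, hα₀, fun α hα => ?_⟩
  have hα' : α ∈ Ioo 0 π := ⟨hα.1, by linarith [hα.2, hα₀.2, pi_pos]⟩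
  have hc : j11 / cos (α / 2) ≠ 0 := (div_pos hj0 (cos_half_pos_s18 hα')).ne'
  have hJ : besselJ 1 (j11 / cos (α / 2) * cos (α / 2)) = 0 := by
    rwa [div_mul_cancel₀ _ (cos_half_pos_s18 hα').ne']
  refine ⟨besselTrial (j11 / cos (α / 2)),
    ⟨univ, isOpen_univ, subset_univ _, (contDiff_besselTrial _).contDiffOn⟩,
    integral_Tri_besselTrial hα' hc hJ, integral_Tri_besselTrial_sq_pos hα' _, ?_⟩
  rw [integral_Tri_norm_gradient_besselTrial_sq hα' hc hJ]
  exact mul_lt_mul_of_pos_right (hsharp α hα) (integral_Tri_besselTrial_sq_pos hα' _)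
end
end
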